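/- Let H ∈ (0, 1/2), T > 0, β ∈ (1/2 − H, 1], and let λ : [0,T] → ℝ be β-Hölder continuous with λ(0) = 0. Then the function F(t) := ∫₀^t λ(s) (t−s)^{H+1/2} ds is differentiable at every t ∈ (0,T), with derivative F′(t) = (H + 1/2) ∫₀^t λ(s) (t−s)^{H−1/2} ds. -/

import Mathlib

/-!
Write `q = H - 1/2 ∈ (-1, 0)` and `g(τ) = ∫₀^τ λ(s) (τ-s)^q ds`. Since
`(r-s)^(q+1) = (q+1) ∫ₛ^r (τ-s)^q dτ`, Fubini gives `∫₀^r λ(s) (r-s)^(q+1) ds = (q+1) ∫₀^r g`,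
so the claim is the fundamental theorem of calculus once `g` is continuous. Continuity of `g`
follows from dominated convergence after substituting `u = τ - s`, which moves the integrable
singularity `u^q` to the fixed point `u = 0`.
-/

open MeasureTheory intervalIntegral Real

open Set

lemma Set.Ioc_inter_Ici_of_lt {α : Type*} [LinearOrder α] {a b c : α} (h : a < c) :
    Ioc a b ∩ Ici c = Icc c b := by
  ext x
  simp only [mem_inter_iff, mem_Ioc, mem_Ici, mem_Icc]
  exact ⟨fun ⟨⟨_, hb⟩, hc⟩ => ⟨hc, hb⟩, fun ⟨hc, hb⟩ => ⟨⟨h.trans_le hc, hb⟩, hc⟩⟩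

lemma continuousOn_of_abs_sub_le_mul_rpow {f : ℝ → ℝ} {S : Set ℝ} {C β : ℝ} (hβ : 0 < β)
    (hf : ∀ s ∈ S, ∀ t ∈ S, |f t - f s| ≤ C * |t - s| ^ β) : ContinuousOn f S := by
  intro x hx
  rw [ContinuousWithinAt, tendsto_iff_norm_sub_tendsto_zero]
  have hlim : Filter.Tendsto (fun y => C * |y - x| ^ β) (nhds x) (nhds 0) := by
    have hcont : Continuous fun y => C * |y - x| ^ β :=
      continuous_const.mul ((continuous_rpow_const hβ.le).comp (by fun_prop))
    simpa [zero_rpow hβ.ne'] using hcont.tendsto x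
  exact squeeze_zero' (.of_forall fun _ => norm_nonneg _)
    (eventually_nhdsWithin_of_forall fun y hy => hf x hx y hy) (hlim.mono_left nhdsWithin_le_nhds)

lemma ContinuousOn.hasDerivAt_integral_of_mem_Ioo {E : Type*} [NormedAddCommGroup E]
    [NormedSpace ℝ E] [CompleteSpace E] {g : ℝ → E} {a b t : ℝ}
    (hg : ContinuousOn g (Icc a b)) (ht : t ∈ Ioo a b) :
    HasDerivAt (fun u => ∫ x in a..u, g x) (g t) t :=
  integral_hasDerivAt_right
    (hg.mono (uIcc_subset_Icc (left_mem_Icc.2 (ht.1.trans ht.2).le)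
      (Ioo_subset_Icc_self ht))).intervalIntegrable
    ((hg.mono Ioo_subset_Icc_self).stronglyMeasurableAtFilter isOpen_Ioo t ht)
    (hg.continuousAt (Icc_mem_nhds ht.1 ht.2))

noncomputable def powKernel (q : ℝ) : ℝ → ℝ := (Ici 0).indicator (· ^ q)

section powKernel

variable {q s r : ℝ}

lemma measurable_powKernel (q : ℝ) : Measurable (powKernel q) :=
  (measurable_id.pow_const q).indicator measurableSet_Ici

lemma powKernel_nonneg (q u : ℝ) : 0 ≤ powKernel q u :=
  indicator_nonneg (fun _ hu => rpow_nonneg hu q) u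

lemma powKernel_sub (q s τ : ℝ) :
    powKernel q (τ - s) = (Ici s).indicator (fun τ => (τ - s) ^ q) τ := by
  simp [powKernel, indicator, sub_nonneg]

lemma mul_powKernel_sub (f : ℝ → ℝ) (q s τ : ℝ) :
    f s * powKernel q (τ - s) = (Iic τ).indicator (fun s => f s * (τ - s) ^ q) s := by
  simp [powKernel, indicator, sub_nonneg]

lemma integrableOn_powKernel_sub (hq : -1 < q) (hs : 0 < s) (hsr : s ≤ r) :
    IntegrableOn (fun τ => powKernel q (τ - s)) (Ioc 0 r) := by
  simp only [powKernel_sub]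
  rw [IntegrableOn, integrable_indicator_iff measurableSet_Ici, IntegrableOn,
    Measure.restrict_restrict measurableSet_Ici, inter_comm, Ioc_inter_Ici_of_lt hs,
    ← IntegrableOn, integrableOn_Icc_iff_integrableOn_Ioc,
    ← intervalIntegrable_iff_integrableOn_Ioc_of_le hsr]
  simpa using (intervalIntegrable_rpow' hq (a := 0) (b := r - s)).comp_sub_right s

lemma setIntegral_powKernel_sub (hq : -1 < q) (hs : 0 < s) (hsr : s ≤ r) :
    ∫ τ in Ioc 0 r, powKernel q (τ - s) = (r - s) ^ (q + 1) / (q + 1) := by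
  simp only [powKernel_sub]
  rw [setIntegral_indicator measurableSet_Ici, Ioc_inter_Ici_of_lt hs,
    integral_Icc_eq_integral_Ioc, ← integral_of_le hsr,
    integral_comp_sub_right (· ^ q), sub_self, integral_rpow (Or.inl hq),
    zero_rpow (by linarith), sub_zero]

end powKernel

theorem integral_integral_mul_rpow_sub {f : ℝ → ℝ} {q r : ℝ} (hq : -1 < q) (hr : 0 ≤ r)
    (hf : IntegrableOn f (Ioc 0 r)) :
    ∫ τ in 0..r, ∫ s in 0..τ, f s * (τ - s) ^ q
      = (∫ s in 0..r, f s * (r - s) ^ (q + 1)) / (q + 1) := by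
  set μ := volume.restrict (Ioc (0 : ℝ) r)
  set Φ : ℝ → ℝ → ℝ := fun τ s => f s * powKernel q (τ - s)
  have inner : ∀ τ ∈ Ioc 0 r, ∫ s in 0..τ, f s * (τ - s) ^ q = ∫ s, Φ τ s ∂μ := by
    rintro τ ⟨hτ, hτr⟩
    simp only [Φ, μ, mul_powKernel_sub]
    rw [setIntegral_indicator measurableSet_Iic, Ioc_inter_Iic, min_eq_right hτr,
      integral_of_le hτ.le]
  have outer : ∀ g : ℝ → ℝ, ∀ s ∈ Ioc 0 r,
      ∫ τ, g s * powKernel q (τ - s) ∂μ = g s * ((r - s) ^ (q + 1) / (q + 1)) :=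
    fun g s hs => by rw [MeasureTheory.integral_const_mul, setIntegral_powKernel_sub hq hs.1 hs.2]
  have hΦ : Integrable (Function.uncurry Φ) (μ.prod μ) := by
    have hmeas : AEStronglyMeasurable (Function.uncurry Φ) (μ.prod μ) :=
      hf.aestronglyMeasurable.comp_snd.mul
        ((measurable_powKernel q).comp (measurable_fst.sub measurable_snd)).aestronglyMeasurable
    refine (integrable_prod_iff' hmeas).2 ⟨?_, ?_⟩
    · filter_upwards [ae_restrict_mem measurableSet_Ioc] with s hs
      exact (integrableOn_powKernel_sub hq hs.1 hs.2).const_mul (f s)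
    · have hnorm : ∀ s ∈ Ioc 0 r, ∫ τ, ‖Φ τ s‖ ∂μ = ‖f s‖ * ((r - s) ^ (q + 1) / (q + 1)) :=
        fun s hs => by
          simp only [Φ, norm_mul, Real.norm_of_nonneg (powKernel_nonneg q _)]
          exact outer (‖f ·‖) s hs
      refine Integrable.congr ?_
        (Filter.EventuallyEq.symm (ae_restrict_of_forall_mem measurableSet_Ioc hnorm))
      refine IntegrableOn.mul_continuousOn_of_subset hf.norm ?_ measurableSet_Ioc isCompact_Icc
        Ioc_subset_Icc_self
      exact ((continuousOn_const.sub continuousOn_id).rpow_const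
        fun _ _ => Or.inr (by linarith)).div_const _
  calc ∫ τ in 0..r, ∫ s in 0..τ, f s * (τ - s) ^ q
      = ∫ τ, ∫ s, Φ τ s ∂μ ∂μ := by
        rw [integral_of_le hr]
        exact setIntegral_congr_fun measurableSet_Ioc inner
    _ = ∫ s, ∫ τ, Φ τ s ∂μ ∂μ := integral_integral_swap hΦ
    _ = ∫ s, f s * ((r - s) ^ (q + 1) / (q + 1)) ∂μ :=
        setIntegral_congr_fun measurableSet_Ioc (outer f)
    _ = (∫ s in 0..r, f s * (r - s) ^ (q + 1)) / (q + 1) := by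
        rw [integral_of_le hr, ← MeasureTheory.integral_div]
        simp only [μ, mul_div_assoc]

lemma integral_mul_rpow_sub_eq (f : ℝ → ℝ) (q τ : ℝ) :
    ∫ s in 0..τ, f s * (τ - s) ^ q = ∫ u in 0..τ, f (τ - u) * u ^ q := by
  simpa using (integral_comp_sub_left (fun s => f s * (τ - s) ^ q) τ (a := 0) (b := τ)).symm

theorem continuousOn_integral_mul_rpow_sub {f : ℝ → ℝ} {q T : ℝ} (hq : -1 < q)
    (hf : ContinuousOn f (Icc 0 T)) :
    ContinuousOn (fun τ => ∫ s in 0..τ, f s * (τ - s) ^ q) (Icc 0 T) := by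
  rcases lt_or_ge T 0 with hT | hT
  · simp [Icc_eq_empty_of_lt hT]
  obtain ⟨M, hM⟩ := isCompact_Icc.exists_bound_of_continuousOn hf
  set f' : ℝ → ℝ := fun s => f (projIcc 0 T hT s)
  have hf' : Continuous f' :=
    hf.comp_continuous (continuous_subtype_val.comp continuous_projIcc)
      fun s => (projIcc 0 T hT s).2
  set F : ℝ → ℝ → ℝ := fun τ u => (Iic τ).indicator (fun u => f' (τ - u) * u ^ q) u
  have hFcont : Continuous fun τ => ∫ u in 0..T, F τ u := by
    refine continuous_iff_continuousAt.2 fun τ₀ =>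
      continuousAt_of_dominated_interval (bound := fun u => M * u ^ q) ?_ ?_ ?_ ?_
    · exact .of_forall fun τ => ((hf'.comp (continuous_const.sub continuous_id)).measurable.mul
        (measurable_id.pow_const q)).indicator measurableSet_Iic |>.aestronglyMeasurable
    · refine .of_forall fun τ => .of_forall fun u hu => ?_
      rw [uIoc_of_le hT] at hu
      refine (norm_indicator_le_norm_self _ _).trans ?_
      rw [norm_mul, Real.norm_of_nonneg (rpow_nonneg hu.1.le q)]
      exact mul_le_mul_of_nonneg_right (hM _ (projIcc 0 T hT _).2) (rpow_nonneg hu.1.le q)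
    · exact (intervalIntegrable_rpow' hq).const_mul M
    · filter_upwards [volume.ae_ne τ₀] with u hu _
      have hcont : Continuous fun τ => f' (τ - u) * u ^ q := by fun_prop
      rcases hu.lt_or_gt with hu | hu
      · exact hcont.continuousAt.congr <| (eventually_gt_nhds hu).mono fun τ hτ =>
          (indicator_of_mem (mem_Iic.2 hτ.le) (fun u => f' (τ - u) * u ^ q)).symm
      · exact continuousAt_const.congr <| (eventually_lt_nhds hu).mono fun τ hτ =>
          (indicator_of_notMem (notMem_Iic.2 hτ) (fun u => f' (τ - u) * u ^ q)).symm
  refine hFcont.continuousOn.congr fun τ hτ => ?_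
  simp only [F, integral_mul_rpow_sub_eq]
  rw [integral_of_le hT, setIntegral_indicator measurableSet_Iic, Ioc_inter_Iic,
    min_eq_right hτ.2, integral_of_le hτ.1]
  refine setIntegral_congr_fun measurableSet_Ioc fun u hu => ?_
  simp only [f', projIcc_of_mem hT ⟨sub_nonneg.2 hu.2, by linarith [hu.1, hτ.2]⟩]

theorem hasDerivAt_GFO_kernel_integral_general
    (H T β : ℝ) (hH : H ∈ Set.Ioo (0:ℝ) (1/2))
    (hβ : β ∈ Set.Ioc (1/2 - H) 1)
    (lam : ℝ → ℝ) (C : ℝ)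
    (hHolder : ∀ s ∈ Set.Icc (0:ℝ) T, ∀ t ∈ Set.Icc (0:ℝ) T,
      |lam t - lam s| ≤ C * |t - s| ^ β) :
    ∀ t ∈ Set.Ioo (0:ℝ) T,
      HasDerivAt (fun τ => ∫ s in (0:ℝ)..τ, lam s * (τ - s) ^ (H + 1/2))
        ((H + 1/2) * ∫ s in (0:ℝ)..t, lam s * (t - s) ^ (H - 1/2)) t := by
  intro t ht
  have hq : -1 < H - 1/2 := by linarith [hH.1]
  have hlam : ContinuousOn lam (Icc 0 T) :=
    continuousOn_of_abs_sub_le_mul_rpow (by linarith [hH.2, hβ.1]) hHolder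
  have hF : ∀ r ∈ Icc 0 T, ∫ s in 0..r, lam s * (r - s) ^ (H + 1/2)
      = (H + 1/2) * ∫ τ in 0..r, ∫ s in 0..τ, lam s * (τ - s) ^ (H - 1/2) := fun r hr => by
    have hlam_int : IntegrableOn lam (Ioc 0 r) :=
      (hlam.mono (Icc_subset_Icc_right hr.2)).integrableOn_Icc.mono_set Ioc_subset_Icc_self
    rw [integral_integral_mul_rpow_sub hq hr.1 hlam_int, show H - 1/2 + 1 = H + 1/2 by ring,
      mul_div_cancel₀ _ (by linarith [hH.1])]
  refine (((continuousOn_integral_mul_rpow_sub hq hlam).hasDerivAt_integral_of_mem_Ioo ht).const_mul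
    (H + 1/2)).congr_of_eventuallyEq ?_
  filter_upwards [Ioo_mem_nhds ht.1 ht.2] with r hr using hF r (Ioo_subset_Icc_self hr)

/-- For `H ∈ (0,1/2)`, `β ∈ (1/2-H, 1]` and `λ : [0,T] → ℝ` β-Hölder continuous with
`λ(0) = 0`, the function `F(t) = ∫₀^t λ(s) (t-s)^(H+1/2) ds` is differentiable at every
`t ∈ (0,T)` with `F'(t) = (H+1/2) ∫₀^t λ(s) (t-s)^(H-1/2) ds`. -/
theorem hasDerivAt_GFO_kernel_integral
    (H T β : ℝ) (hH : H ∈ Set.Ioo (0:ℝ) (1/2)) (hT : 0 < T)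
    (hβ : β ∈ Set.Ioc (1/2 - H) 1)
    (lam : ℝ → ℝ) (C : ℝ) (hC : 0 ≤ C)
    (hHolder : ∀ s ∈ Set.Icc (0:ℝ) T, ∀ t ∈ Set.Icc (0:ℝ) T,
      |lam t - lam s| ≤ C * |t - s| ^ β)
    (hlam0 : lam 0 = 0) :
    ∀ t ∈ Set.Ioo (0:ℝ) T,
      HasDerivAt (fun τ => ∫ s in (0:ℝ)..τ, lam s * (τ - s) ^ (H + 1/2))
        ((H + 1/2) * ∫ s in (0:ℝ)..t, lam s * (t - s) ^ (H - 1/2)) t :=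
  hasDerivAt_GFO_kernel_integral_general H T β hH hβ lam C hHolder
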